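/- arXiv:2501.08823 — 2 statements merged into one kernel-verified Lean document; each statement's English description precedes it below -/
import Mathlib

section
/- For every n ≥ 1, if the diagonal entry d(n) = A(n,n) of the Hurt-Sada array satisfies d(n) ≥ n, then d(n) = ⌊(2φ − 2)n⌋ + 1. -/
/-- The golden ratio `(1 + √5)/2`. -/
noncomputable def phi : ℝ := (1 + Real.sqrt 5) / 2


lemma irr5 : Irrational (Real.sqrt 5) := by
  have := (by norm_num : Nat.Prime 5).irrational_sqrt
  simpa using this
lemma s5 : Real.sqrt 5 ^ 2 = 5 := Real.sq_sqrt (by norm_num)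
lemma s5nn : (0:ℝ) ≤ Real.sqrt 5 := Real.sqrt_nonneg 5
lemma phi_gt : (1.6:ℝ) < phi := by unfold phi; nlinarith [s5, s5nn]
lemma phi_lt : phi < 1.62 := by unfold phi; nlinarith [s5, s5nn]
lemma phi_sq : phi * phi = phi + 1 := by unfold phi; nlinarith [s5, s5nn]
lemma phi_pos : (0:ℝ) < phi := by linarith [phi_gt]
lemma phi_mul_nat_ne (k m : ℕ) (hk : k ≠ 0) : phi * k ≠ (m:ℝ) := by
  intro h
  have hk' : (k:ℝ) ≠ 0 := Nat.cast_ne_zero.2 hk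
  apply irr5
  refine ⟨((2*m - k : ℤ) : ℚ) / ((k:ℤ) : ℚ), ?_⟩
  have h2 : Real.sqrt 5 = (2*(m:ℝ) - k)/k := by
    unfold phi at h; field_simp at h ⊢; linarith
  rw [h2]; push_cast; ring

noncomputable def aa (k : ℕ) : ℕ := ⌊phi * k⌋₊

lemma aa_le (k : ℕ) : (aa k : ℝ) ≤ phi * k :=
  Nat.floor_le (mul_nonneg phi_pos.le (Nat.cast_nonneg k))
lemma aa_lt (k : ℕ) (hk : k ≠ 0) : (aa k : ℝ) < phi * k :=
  lt_of_le_of_ne (aa_le k) (fun h => phi_mul_nat_ne k (aa k) hk h.symm)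
lemma aa_gt (k : ℕ) : phi * k < aa k + 1 := Nat.lt_floor_add_one _
lemma aa_eq (k V : ℕ) (h1 : (V:ℝ) ≤ phi*k) (h2 : phi*k < V+1) : aa k = V := by
  unfold aa; rw [Nat.floor_eq_iff (mul_nonneg phi_pos.le (Nat.cast_nonneg k))]; exact ⟨h1, h2⟩

lemma aa_one : aa 1 = 1 := by
  apply aa_eq <;> push_cast <;> [linarith [phi_gt]; linarith [phi_lt]]

lemma aa_lb (k : ℕ) (h : 2 ≤ k) : k + 1 ≤ aa k := by
  have h1 := aa_gt k
  have h2 : (2:ℝ) ≤ k := by exact_mod_cast h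
  have h3 : (k:ℝ) + 1 < phi * k := by nlinarith [phi_gt]
  have h4 : (k:ℝ) < aa k := by linarith
  exact_mod_cast h4

lemma aa_ub (k : ℕ) : aa k + 1 ≤ 2*k + 1 := by
  have h1 := aa_le k
  have : (aa k : ℝ) ≤ 2*k := by nlinarith [phi_lt, Nat.cast_nonneg (α := ℝ) k]
  have : aa k ≤ 2*k := by exact_mod_cast this
  omega

lemma aa_mono (k : ℕ) : aa k + 1 ≤ aa (k+1) := by
  have h1 := aa_le k
  have h2 := aa_gt (k+1)
  push_cast at h2
  have h3 : ((aa k : ℝ)) + 1 < phi * ((k:ℝ)+1) := by nlinarith [phi_gt]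
  have h4 : ((aa k : ℝ)) < (aa (k+1) : ℝ) := by linarith
  have : aa k < aa (k+1) := by exact_mod_cast h4
  omega

lemma aa_jump (k : ℕ) : aa (k+1) ≤ aa k + 2 := by
  have h1 := aa_gt k
  have h2 := aa_le (k+1)
  push_cast at h2
  have h3 : ((aa (k+1)) : ℝ) < (aa k : ℝ) + 3 := by nlinarith [phi_lt, Nat.cast_nonneg (α := ℝ) k]
  have : aa (k+1) < aa k + 3 := by exact_mod_cast h3
  omega

lemma aa_ub2 (n : ℕ) (hn : 1 ≤ n) : aa (n+2) ≤ 2*n+2 := by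
  have h1 := aa_le (n+2)
  push_cast at h1
  have hn' : (1:ℝ) ≤ n := by exact_mod_cast hn
  have h2 : (aa (n+2) : ℝ) < 2*n+3 := by nlinarith [phi_lt]
  have : aa (n+2) < 2*n+3 := by exact_mod_cast h2
  omega

lemma frozen_iff (m n : ℕ) : aa (m+1) ≤ n+1 ↔ m+n+3 ≤ aa (n+2) := by
  have hg1 := aa_gt (m+1)
  have hg2 := aa_gt (n+2)
  have hl1 := aa_lt (m+1) (by omega)
  have hl2 := aa_lt (n+2) (by omega)
  push_cast at hg1 hg2 hl1 hl2
  have hphim1 : (0:ℝ) < phi - 1 := by linarith [phi_gt]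
  constructor
  · intro h
    have h' : (aa (m+1) : ℝ) ≤ (n:ℝ)+1 := by
      have : ((aa (m+1):ℕ) : ℝ) ≤ ((n+1:ℕ) : ℝ) := by exact_mod_cast h
      push_cast at this; linarith
    have hx : phi * ((m:ℝ)+1) < (n:ℝ)+2 := by linarith
    have key : ((m:ℝ)+n+3) < phi * ((n:ℝ)+2) := by
      nlinarith [phi_sq, mul_lt_mul_of_pos_left hx hphim1]
    have h2 : ((m+n+2 : ℕ) : ℝ) < (aa (n+2) : ℝ) := by push_cast; linarith
    have h3 : (m+n+2 : ℕ) < aa (n+2) := by exact_mod_cast h2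
    omega
  · intro h
    have h' : ((m:ℝ)+n+3) ≤ (aa (n+2) : ℝ) := by
      have : ((m+n+3 : ℕ) : ℝ) ≤ (aa (n+2) : ℝ) := by exact_mod_cast h
      push_cast at this; linarith
    have hx : ((m:ℝ)+1) < (phi-1) * ((n:ℝ)+2) := by nlinarith
    have key : phi * ((m:ℝ)+1) < (n:ℝ)+2 := by
      nlinarith [phi_sq, mul_lt_mul_of_pos_left hx phi_pos]
    have h2 : ((aa (m+1):ℕ) : ℝ) < ((n+2:ℕ):ℝ) := by
      have := aa_le (m+1); push_cast at this ⊢; linarith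
    have h3 : aa (m+1) < n+2 := by exact_mod_cast h2
    omega

lemma aa_id5 (k : ℕ) (hk : k ≠ 0) : aa (aa k + 1) = aa k + k + 1 := by
  have hA1 := aa_lt k hk
  have hA2 := aa_gt k
  have hphim1 : (0:ℝ) < phi - 1 := by linarith [phi_gt]
  apply aa_eq
  · push_cast
    nlinarith [phi_sq, mul_lt_mul_of_pos_left hA2 hphim1]
  · push_cast
    nlinarith [phi_sq, mul_lt_mul_of_pos_left hA1 hphim1, phi_lt]

lemma aa_id7 (k : ℕ) (hk : k ≠ 0) : aa (aa k + k + 2) = 2*(aa k) + k + 3 := by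
  have hA1 := aa_lt k hk
  have hA2 := aa_gt k
  have hpk : phi*(phi*(k:ℝ)) = (phi+1)*k := by rw [← mul_assoc, phi_sq]
  have h2mphi : (0:ℝ) < 2 - phi := by linarith [phi_lt]
  have hth0 : (0:ℝ) ≤ phi*k - aa k := by linarith
  have hth1 : phi*(k:ℝ) - aa k < 1 := by linarith
  apply aa_eq
  · push_cast
    nlinarith [hpk, phi_gt, mul_nonneg hth0 h2mphi.le]
  · push_cast
    nlinarith [hpk, phi_lt, mul_lt_mul_of_pos_right hth1 h2mphi]

lemma aa_id8 (k : ℕ) (hk : k ≠ 0) (hj : aa (k+1) = aa k + 2) :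
    aa (aa k + k + 3) = 2*(aa k) + k + 5 := by
  have hA1 := aa_lt k hk
  have hA2 := aa_gt k
  have hth : (2:ℝ) - phi < phi*k - aa k := by
    have := aa_lt (k+1) (by omega)
    rw [hj] at this
    push_cast at this
    linarith
  have hpk : phi*(phi*(k:ℝ)) = (phi+1)*k := by rw [← mul_assoc, phi_sq]
  have h2mphi : (0:ℝ) < 2 - phi := by linarith [phi_lt]
  have hth1 : phi*(k:ℝ) - aa k < 1 := by linarith
  apply aa_eq
  · push_cast
    nlinarith [hpk, phi_sq, phi_gt, mul_lt_mul_of_pos_right hth h2mphi]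
  · push_cast
    nlinarith [hpk, phi_lt, mul_lt_mul_of_pos_right hth1 h2mphi]

lemma aa_ub3 (n : ℕ) : aa (n+2) ≤ 2*n+3 := by
  have h1 := aa_le (n+2)
  push_cast at h1
  have h2 : (aa (n+2):ℝ) < 2*n+4 := by nlinarith [phi_lt, Nat.cast_nonneg (α := ℝ) n]
  have h3 : aa (n+2) < 2*n+4 := by exact_mod_cast h2
  omega

noncomputable def pos (n m : ℕ) : ℕ :=
  if aa (m+1) ≤ n+1 then m else m + 1 + aa (m+1) - (n+2)

lemma pos_frozen {n m : ℕ} (h : aa (m+1) ≤ n+1) : pos n m = m := by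
  unfold pos; rw [if_pos h]

lemma pos_mov {n m : ℕ} (h : n+2 ≤ aa (m+1)) : pos n m + (n+2) = m + 1 + aa (m+1) := by
  unfold pos; rw [if_neg (by omega)]; omega

lemma pos_mov_ge {n m : ℕ} (h : n+2 ≤ aa (m+1)) : m + 1 ≤ pos n m := by
  have := pos_mov h; omega

lemma pos_ge (n m : ℕ) : m ≤ pos n m := by
  unfold pos; split <;> omega

lemma pos_strictMono (n : ℕ) : StrictMono (pos n) := by
  apply strictMono_nat_of_lt_succ
  intro m
  have hmono := aa_mono (m+1)
  have he : m+1+1 = m+2 := rfl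
  rw [he] at hmono
  by_cases h2 : aa (m+2) ≤ n+1
  · have h1 : aa (m+1) ≤ n+1 := by omega
    rw [pos_frozen h1, pos_frozen h2]; omega
  · have h2' : n+2 ≤ aa (m+1+1) := by rw [he]; omega
    have hp2 := pos_mov (n := n) (m := m+1) h2'
    rw [he] at hp2
    by_cases h1 : aa (m+1) ≤ n+1
    · rw [pos_frozen h1]; omega
    · have hp1 := pos_mov (n := n) (m := m) (by omega : n+2 ≤ aa (m+1))
      omega

lemma pos_inj {n m m' : ℕ} (h : pos n m = pos n m') : m = m' :=
  (pos_strictMono n).injective h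

lemma pos_diag (n : ℕ) : pos n n + 1 = aa (n+1) := by
  rcases Nat.eq_zero_or_pos n with h | h
  · subst h
    rw [pos_frozen (by rw [aa_one])]
    rw [aa_one]
  · have h1 : n + 2 ≤ aa (n+1) := aa_lb (n+1) (by omega)
    have := pos_mov (n := n) (m := n) h1
    omega

open Classical in
noncomputable def F (n j : ℕ) : ℕ :=
  if ∃ m, m ≤ n ∧ pos n m = j then sInf {m | m ≤ n ∧ pos n m = j}
  else if j ≤ pos n n then aa (n+j+3) - (n+j+4) else j

lemma F_small {n m j : ℕ} (hm : m ≤ n) (hj : pos n m = j) : F n j = m := by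
  unfold F
  rw [if_pos ⟨m, hm, hj⟩]
  have : {m' | m' ≤ n ∧ pos n m' = j} = {m} := by
    ext m'
    simp only [Set.mem_setOf_eq, Set.mem_singleton_iff]
    constructor
    · rintro ⟨_, h2⟩; exact pos_inj (h2.trans hj.symm)
    · rintro rfl; exact ⟨hm, hj⟩
  rw [this]
  exact csInf_singleton m

lemma F_large {n j : ℕ} (hns : ∀ m, m ≤ n → pos n m ≠ j) (hj : j ≤ pos n n) :
    F n j = aa (n+j+3) - (n+j+4) := by
  unfold F
  rw [if_neg (by rintro ⟨m, hm, hp⟩; exact hns m hm hp), if_pos hj]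

lemma F_tail {n j : ℕ} (hj : pos n n < j) : F n j = j := by
  unfold F
  rw [if_neg, if_neg (by omega)]
  rintro ⟨m, hm, hp⟩
  have : pos n m ≤ pos n n := (pos_strictMono n).monotone hm
  omega

lemma sInf_F (n Q : ℕ) (hQ : aa (n+2) = Q + (n+2)) : sInf {i | F n i = n+1} = Q := by
  have hQ1 : 1 ≤ Q := by have := aa_lb (n+2) (by omega); omega
  have hQle : Q ≤ n+1 := by have := aa_ub3 n; omega
  have hfroz : ∀ i, i + 1 ≤ Q → F n i = i := by
    intro i hi
    exact F_small (by omega) (pos_frozen ((frozen_iff i n).mpr (by omega)))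
  have hFQ : F n Q = n+1 := by
    rcases Nat.eq_zero_or_pos n with hn | hn
    · subst hn
      have ha2 : aa 2 = 3 := by
        have h1 := aa_lb 2 (by omega)
        have h2 : aa 2 ≤ 3 := aa_ub3 0
        omega
      have hQ2 : Q = 1 := by omega
      have hd := pos_diag 0
      rw [aa_one] at hd
      rw [hQ2, F_tail (by omega)]
    · have hQn : Q ≤ n := by have := aa_ub2 n hn; omega
      have hd := pos_diag n
      have hQfree : n+2 ≤ aa (Q+1) := by
        by_contra hcon
        have := (frozen_iff Q n).mp (by omega)
        omega
      have hposQ := pos_mov (n := n) (m := Q) hQfree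
      have hns : ∀ m, m ≤ n → pos n m ≠ Q := by
        intro m hm hcon
        by_cases hf : aa (m+1) ≤ n+1
        · rw [pos_frozen hf] at hcon
          have := (frozen_iff m n).mp hf
          omega
        · have hQm : Q ≤ m := by
            by_contra hcon2
            have := (frozen_iff m n).mpr (by omega)
            omega
          have := (pos_strictMono n).monotone hQm
          omega
      have hjmp := aa_jump (n+1)
      have e2 : n+1+1 = n+2 := by omega
      rw [e2] at hjmp
      have hQd : Q ≤ pos n n := by omega
      rw [F_large hns hQd]
      have h5 := aa_id5 (n+2) (by omega)
      have hidx : n+Q+3 = aa (n+2) + 1 := by omega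
      rw [hidx, h5]
      omega
  apply le_antisymm
  · exact Nat.sInf_le (show Q ∈ {i | F n i = n+1} from hFQ)
  · apply le_csInf ⟨Q, show Q ∈ {i | F n i = n+1} from hFQ⟩
    intro i hi
    by_contra hlt
    push_neg at hlt
    have := hfroz i (by omega)
    have : i = n+1 := by
      have hFi : F n i = n+1 := hi
      omega
    omega

lemma Fcase1 (n j Q : ℕ) (hQ : aa (n+2) = Q+(n+2)) (hj : j < Q) : F (n+1) j = F n j := by
  have hQle : Q ≤ n+1 := by have := aa_ub3 n; omega
  have hf : aa (j+1) ≤ n+1 := (frozen_iff j n).mpr (by omega)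
  rw [F_small (show j ≤ n by omega) (pos_frozen hf),
      F_small (show j ≤ n+1 by omega) (pos_frozen (show aa (j+1) ≤ (n+1)+1 by omega))]

lemma Fcase3 (n Q : ℕ) (hQ : aa (n+2) = Q+(n+2)) : F (n+1) (Q+(n+1)) = n+1 := by
  have hd1 := pos_diag (n+1)
  have e2 : n+1+1 = n+2 := by omega
  rw [e2] at hd1
  exact F_small (le_refl (n+1)) (by omega)

lemma Fcase4 (n j Q : ℕ) (hQ : aa (n+2) = Q+(n+2)) (hj : Q+(n+1) < j) : F (n+1) j = F n j := by
  have hd1 := pos_diag (n+1)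
  have e2 : n+1+1 = n+2 := by omega
  rw [e2] at hd1
  have hd := pos_diag n
  have hmono := aa_mono (n+1)
  rw [e2] at hmono
  rw [F_tail (show pos (n+1) (n+1) < j by omega), F_tail (show pos n n < j by omega)]

lemma Fcase2 (n j Q : ℕ) (hQ : aa (n+2) = Q+(n+2)) (h1 : Q ≤ j) (h2 : j < Q+(n+1)) :
    F (n+1) j = F n (j+1) := by
  have hQ1 : 1 ≤ Q := by have := aa_lb (n+2) (by omega); omega
  have e2 : n+1+1 = n+2 := by omega
  have hd : pos n n + 1 = aa (n+1) := pos_diag n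
  have hd1 := pos_diag (n+1)
  rw [e2] at hd1
  by_cases hex : ∃ m, m ≤ n ∧ pos n m = j+1
  · obtain ⟨m, hm, hpm⟩ := hex
    have hnotf : ¬ aa (m+1) ≤ n+1 := by
      intro hf
      rw [pos_frozen hf] at hpm
      have := (frozen_iff m n).mp hf
      omega
    have hE := pos_mov (n := n) (m := m) (by omega)
    rw [hpm] at hE
    rw [F_small hm hpm]
    by_cases hf2 : aa (m+1) ≤ n+2
    · exact F_small (by omega) (by rw [pos_frozen (show aa (m+1) ≤ (n+1)+1 by omega)]; omega)
    · have hE2 := pos_mov (n := n+1) (m := m) (by omega)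
      exact F_small (by omega) (by omega)
  · push_neg at hex
    have hns1 : ∀ m, m ≤ n+1 → pos (n+1) m ≠ j := by
      intro m hm hcon
      rcases Nat.lt_or_ge m (n+1) with hmn | hmn
      · have hm' : m ≤ n := by omega
        by_cases hf1 : aa (m+1) ≤ n+1
        · rw [pos_frozen (show aa (m+1) ≤ (n+1)+1 by omega)] at hcon
          have := (frozen_iff m n).mp hf1
          omega
        · by_cases hf2 : aa (m+1) ≤ n+2
          · rw [pos_frozen (show aa (m+1) ≤ (n+1)+1 by omega)] at hcon
            have := pos_mov (n := n) (m := m) (by omega)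
            exact hex m hm' (by omega)
          · have hE1 := pos_mov (n := n) (m := m) (by omega)
            have hE2 := pos_mov (n := n+1) (m := m) (by omega)
            exact hex m hm' (by omega)
      · have hmeq : m = n+1 := by omega
        subst hmeq
        omega
    have hjle : j ≤ pos (n+1) (n+1) := by omega
    rw [F_large hns1 hjle]
    by_cases hwin : j+1 ≤ pos n n
    · rw [F_large hex hwin,
        show n+1+j+3 = n+(j+1)+3 by omega, show n+1+j+4 = n+(j+1)+4 by omega]
    · push_neg at hwin
      rw [F_tail hwin]
      have hjmp := aa_jump (n+1)
      rw [e2] at hjmp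
      have hjub : j + 1 ≤ aa (n+1) + 1 := by omega
      rcases (by omega : j + 1 = aa (n+1) ∨ j + 1 = aa (n+1) + 1) with hcase | hcase
      · have h7 := aa_id7 (n+1) (by omega)
        rw [show n+1+j+3 = aa (n+1) + (n+1) + 2 by omega, h7]
        omega
      · have hjmp2 : aa (n+2) = aa (n+1) + 2 := by omega
        have h8 := aa_id8 (n+1) (by omega) (by rw [e2]; omega)
        rw [show n+1+j+3 = aa (n+1) + (n+1) + 3 by omega, h8]
        omega

/-- The Hurt-Sada array `A : ℕ → ℕ → ℕ`.  Row `0` is the identity sequence;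
row `n+1` is obtained from row `n` by moving the entry `n+1` (located at the unique
position `p` with `A n p = n+1`) by `n+1` places to the right, shifting the jumped-over
entries one place left. -/
noncomputable def A : ℕ → ℕ → ℕ
  | 0, k => k
  | n + 1, j =>
    let p := sInf {i | A n i = n + 1}
    if j < p then A n j
    else if j < p + (n + 1) then A n (j + 1)
    else if j = p + (n + 1) then n + 1
    else A n j


lemma A_succ (n j : ℕ) : A (n+1) j =
    (if j < sInf {i | A n i = n + 1} then A n j
    else if j < sInf {i | A n i = n + 1} + (n + 1) then A n (j + 1)
    else if j = sInf {i | A n i = n + 1} + (n + 1) then n + 1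
    else A n j) := by rw [A]

theorem A_eq_F : ∀ n j, A n j = F n j := by
  intro n
  induction n with
  | zero =>
    intro j
    show j = F 0 j
    rcases Nat.eq_zero_or_pos j with rfl | hj
    · rw [F_small (le_refl 0) (pos_frozen (by rw [aa_one]))]
    · have hd := pos_diag 0
      rw [aa_one] at hd
      rw [F_tail (by omega)]
  | succ n IH =>
    intro j
    obtain ⟨Q, hQ⟩ : ∃ Q, aa (n+2) = Q + (n+2) :=
      ⟨aa (n+2) - (n+2), by have := aa_lb (n+2) (by omega); omega⟩
    have hset : {i | A n i = n+1} = {i | F n i = n+1} := by ext i; simp [IH]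
    have hsInf : sInf {i | A n i = n+1} = Q := by rw [hset]; exact sInf_F n Q hQ
    rw [A_succ, hsInf, IH j, IH (j+1)]
    by_cases hc : j < Q
    · rw [if_pos hc]; exact (Fcase1 n j Q hQ hc).symm
    · rw [if_neg hc]
      by_cases hc2 : j < Q + (n+1)
      · rw [if_pos hc2]; exact (Fcase2 n j Q hQ (by omega) hc2).symm
      · rw [if_neg hc2]
        by_cases hc3 : j = Q + (n+1)
        · rw [if_pos hc3]; subst hc3; exact (Fcase3 n Q hQ).symm
        · rw [if_neg hc3]; exact (Fcase4 n j Q hQ (by omega)).symm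

theorem diagonal_ge_formula (n : ℕ) (hn : 1 ≤ n) (h : n ≤ A n n) :
    A n n = ⌊(2 * phi - 2) * (n : ℝ)⌋₊ + 1 := by
  rw [A_eq_F] at h ⊢
  have hd := pos_diag n
  have halb := aa_lb (n+1) (by omega)
  by_cases hex : ∃ m, m ≤ n ∧ pos n m = n
  · obtain ⟨m, hm, hpm⟩ := hex
    have hFm : F n n = m := F_small hm hpm
    have hmn : m ≠ n := by
      intro e; subst e; omega
    omega
  · push_neg at hex
    rw [F_large hex (by omega)]
    set u : ℝ := (2 * phi - 2) * (n : ℝ) with hu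
    set w : ℕ := ⌊u⌋₊ with hwdef
    have hn1 : (1:ℝ) ≤ (n:ℝ) := by exact_mod_cast hn
    have hu0 : (0:ℝ) ≤ u := by
      rw [hu]; apply mul_nonneg (by linarith [phi_gt]) (by linarith)
    have hu1 : (w:ℝ) ≤ u := Nat.floor_le hu0
    have hu2 : u < w + 1 := Nat.lt_floor_add_one u
    have h2phin : 2*(phi*(n:ℝ)) = u + 2*n := by rw [hu]; ring
    have hphiu : phi * u = 2*(n:ℝ) := by
      have e : phi * u = 2*((phi*phi)*(n:ℝ)) - 2*(phi*(n:ℝ)) := by rw [hu]; ring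
      rw [phi_sq] at e; rw [e]; ring
    have hwn : n ≤ w := by
      have : (n:ℝ) < u := by rw [hu]; nlinarith [phi_gt]
      have : (n:ℝ) < (w:ℝ) + 1 := by linarith
      have : n < w + 1 := by exact_mod_cast this
      omega
    have hw2n : w ≤ 2*n := by
      have : u < 2*(n:ℝ) := by rw [hu]; nlinarith [phi_lt]
      have : (w:ℝ) < 2*(n:ℝ) := by linarith
      have : w < 2*n := by exact_mod_cast this
      omega
    rcases lt_or_ge (u - w) (5 - 3*phi) with hbad | hgood
    · exfalso
      obtain ⟨m, hmw⟩ : ∃ m, m + w = 2*n := ⟨2*n - w, by omega⟩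
      have hcm : (m:ℝ) + (w:ℝ) = 2*(n:ℝ) := by exact_mod_cast hmw
      have hth0 : (0:ℝ) ≤ u - w := by linarith
      have hval : phi * ((m:ℝ)+1) = u + phi + phi*(u - (w:ℝ)) := by
        have e1 : phi * ((m:ℝ)+1) = 2*(phi*(n:ℝ)) + phi - phi*u + phi*(u-w) := by
          have : (m:ℝ) = 2*(n:ℝ) - w := by linarith
          rw [this]; ring
        rw [e1, hphiu]; linarith
      have haM : aa (m+1) = w+1 := by
        apply aa_eq
        · push_cast
          nlinarith [mul_nonneg phi_pos.le hth0, phi_gt]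
        · push_cast
          have hp1 : (0:ℝ) < 1 + phi := by linarith [phi_gt]
          nlinarith [mul_lt_mul_of_pos_left hbad hp1, phi_sq]
      have hfin : pos n m = n := by
        by_cases hf : aa (m+1) ≤ n+1
        · exfalso
          have hweq : w ≤ n := by omega
          have : m = n := by omega
          subst this
          omega
        · have := pos_mov (n := n) (m := m) (by omega)
          omega
      exact hex m (by omega) hfin
    · have haT : aa (n+n+3) = w + 2*n + 5 := by
        apply aa_eq
        · push_cast
          nlinarith [h2phin, phi_gt]
        · push_cast
          nlinarith [h2phin, phi_lt]
      rw [haT]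
      omega
end

section
/- For every n ≥ 1, setting b(n) = ⌊(n+2)/φ⌋ − 1, one has A(n,i) = i for all i ≤ b(n), and A(n, b(n)+1) ≠ b(n)+1; that is, b(n) = ⌊(n+2)/φ⌋ − 1 is the last column of the initial fixed segment of row n of the Hurt-Sada array. -/
/-!
Write `a k = ⌊k φ⌋` for the lower and `b k = a k + k = ⌊k φ²⌋` for the upper Wythoff sequence;
by Rayleigh's theorem they partition the positive integers. By induction on `n`, in row `n` an
entry `v ≥ n + 1` that has not jumped yet sits at `a (v + 1) - (n + 2)` (while
`a (v + 1) ≤ b (n + 1)`), an entry `v ≤ n` that has jumped sits at `b (v + 1) - (n + 2)` (while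
`b (v + 1) ≥ a (n + 2)`), and the positions before `a (n + 2) - (n + 2)` and from `a (n + 1)` on
are fixed. So `n + 1` sits at `a (n + 2) - (n + 2) = ⌊(n + 2) / φ⌋` and the fixed segment ends
just before it.
-/

open Real goldenRatio

lemma phi_eq_goldenRatio : phi = φ := rfl

lemma three_halves_lt_goldenRatio : 3 / 2 < φ := by
  have : 2 < √5 := by
    rw [show (2 : ℝ) = √(2 ^ 2) by simp]
    exact Real.sqrt_lt_sqrt (by norm_num) (by norm_num)
  rw [goldenRatio]
  linarith

lemma goldenRatio_lt_five_thirds : φ < 5 / 3 := by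
  have : √5 < 7 / 3 := by
    rw [show (7 / 3 : ℝ) = √((7 / 3) ^ 2) by rw [Real.sqrt_sq (by norm_num)]]
    exact Real.sqrt_lt_sqrt (by norm_num) (by norm_num)
  rw [goldenRatio]
  linarith

noncomputable def lowerWythoff (k : ℕ) : ℕ := ⌊(k : ℝ) * φ⌋₊

lemma lowerWythoff_eq_iff {k m : ℕ} :
    lowerWythoff k = m ↔ (m : ℝ) ≤ k * φ ∧ k * φ < m + 1 :=
  Nat.floor_eq_iff (by positivity)

lemma lowerWythoff_le (k : ℕ) : (lowerWythoff k : ℝ) ≤ k * φ :=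
  Nat.floor_le (by positivity)

lemma lt_lowerWythoff_add_one (k : ℕ) : (k : ℝ) * φ < lowerWythoff k + 1 :=
  Nat.lt_floor_add_one _

lemma lowerWythoff_lt {k : ℕ} (hk : k ≠ 0) : (lowerWythoff k : ℝ) < k * φ :=
  (lowerWythoff_le k).lt_of_ne fun h ↦ (goldenRatio_irrational.natCast_mul hk).ne_nat _ h.symm

lemma lowerWythoff_zero : lowerWythoff 0 = 0 := by simp [lowerWythoff]

lemma lowerWythoff_one : lowerWythoff 1 = 1 := by
  rw [lowerWythoff_eq_iff]; push_cast
  constructor <;> linarith [three_halves_lt_goldenRatio, goldenRatio_lt_five_thirds]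

lemma lowerWythoff_two : lowerWythoff 2 = 3 := by
  rw [lowerWythoff_eq_iff]; push_cast
  constructor <;> linarith [three_halves_lt_goldenRatio, goldenRatio_lt_five_thirds]

lemma lowerWythoff_three : lowerWythoff 3 = 4 := by
  rw [lowerWythoff_eq_iff]; push_cast
  constructor <;> linarith [three_halves_lt_goldenRatio, goldenRatio_lt_five_thirds]

lemma lowerWythoff_strictMono : StrictMono lowerWythoff := by
  refine strictMono_nat_of_lt_succ fun m ↦ Nat.le_floor ?_
  push_cast
  linarith [lowerWythoff_le m, one_lt_goldenRatio]

lemma le_lowerWythoff (k : ℕ) : k ≤ lowerWythoff k := lowerWythoff_strictMono.id_le k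

lemma lowerWythoff_succ_le (m : ℕ) : lowerWythoff (m + 1) ≤ lowerWythoff m + 2 := by
  have : lowerWythoff (m + 1) < lowerWythoff m + 3 := by
    refine (Nat.floor_lt' (by omega)).mpr ?_
    push_cast
    linarith [lt_lowerWythoff_add_one m, goldenRatio_lt_two]
  omega

lemma lt_lowerWythoff {m : ℕ} (hm : 2 ≤ m) : m < lowerWythoff m := by
  refine Nat.le_floor ?_
  have : (2 : ℝ) ≤ m := by exact_mod_cast hm
  push_cast
  nlinarith [three_halves_lt_goldenRatio]

lemma lowerWythoff_add_two_le {n : ℕ} (hn : 1 ≤ n) : lowerWythoff (n + 2) ≤ 2 * n + 2 := by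
  have h1 : (1 : ℝ) ≤ n := by exact_mod_cast hn
  have : lowerWythoff (n + 2) < 2 * n + 3 := by
    refine (Nat.floor_lt' (by omega)).mpr ?_
    push_cast
    nlinarith [goldenRatio_lt_five_thirds]
  omega

lemma lowerWythoff_eq_add_floor_div (k : ℕ) : lowerWythoff k = k + ⌊(k : ℝ) / φ⌋₊ := by
  have : (k : ℝ) * φ = k / φ + k := by
    rw [div_eq_mul_inv, inv_goldenRatio, ← one_sub_goldenConj]
    ring
  rw [lowerWythoff, this, Nat.floor_add_natCast (by positivity), add_comm]

lemma lowerWythoff_eq_add_of_between {n k : ℕ}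
    (h1 : lowerWythoff (n + 1) + (n + 1) < lowerWythoff k)
    (h2 : lowerWythoff k < lowerWythoff (n + 2) + (n + 2)) :
    lowerWythoff k = k + (n + 1) := by
  have hk : k ≠ 0 := by rintro rfl; simp [lowerWythoff_zero] at h1
  have h1' : (lowerWythoff (n + 1) : ℝ) + (n + 2) ≤ lowerWythoff k := by exact_mod_cast h1
  have h2' : (lowerWythoff k : ℝ) + 1 ≤ lowerWythoff (n + 2) + (n + 2) := by exact_mod_cast h2
  have hlo := lt_lowerWythoff_add_one (n + 1)
  have hhi := lowerWythoff_le (n + 2)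
  have hk' := lowerWythoff_lt hk
  have hk'' := lt_lowerWythoff_add_one k
  push_cast at hlo hhi
  have hsq (x : ℝ) : x * φ * φ = x * φ + x := by linear_combination x * goldenRatio_sq
  have hlow : ((n : ℝ) + 1) * φ < k :=
    lt_of_mul_lt_mul_right (by linarith [hsq ((n : ℝ) + 1)]) goldenRatio_pos.le
  have hhigh : (k : ℝ) < (n + 2) * φ :=
    lt_of_mul_lt_mul_right (by linarith [hsq ((n : ℝ) + 2)]) goldenRatio_pos.le
  rw [lowerWythoff_eq_add_floor_div k, Nat.add_left_cancel_iff, Nat.floor_eq_iff (by positivity),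
    le_div_iff₀ goldenRatio_pos, div_lt_iff₀ goldenRatio_pos]
  push_cast
  constructor <;> linarith

lemma lowerWythoff_eq_of_succ_eq_add_two {m k : ℕ} (hm : m ≠ 0)
    (hgap : lowerWythoff (m + 1) = lowerWythoff m + 2) (hk : k + m = lowerWythoff m + 1) :
    lowerWythoff k = m := by
  have h3 := lowerWythoff_lt hm
  have h4 := lt_lowerWythoff_add_one m
  have h5 : (lowerWythoff m : ℝ) + 2 < (m + 1) * φ := by
    have := lowerWythoff_lt (Nat.succ_ne_zero m)
    rw [hgap] at this
    push_cast at this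
    linarith
  have hkc : (k : ℝ) = lowerWythoff m + 1 - m := by
    have : (k : ℝ) + m = lowerWythoff m + 1 := by exact_mod_cast hk
    linarith
  rw [lowerWythoff_eq_iff, hkc]
  constructor <;> nlinarith [goldenRatio_sq, one_lt_goldenRatio]

lemma goldenRatio_holderConjugate : HolderConjugate φ (φ + 1) := by
  refine Real.holderConjugate_iff.mpr ⟨one_lt_goldenRatio, ?_⟩
  rw [← goldenRatio_sq, ← inv_pow, inv_goldenRatio, ← one_sub_goldenConj]
  linear_combination goldenRatio_sq

lemma natCast_lowerWythoff (k : ℕ) : (lowerWythoff k : ℤ) = beattySeq φ k :=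
  Int.natCast_floor_eq_floor (by positivity)

open scoped symmDiff in
lemma lowerWythoff_ne_add_self (k : ℕ) {m : ℕ} (hm : m ≠ 0) :
    lowerWythoff k ≠ lowerWythoff m + m := by
  intro h
  have hpos : (0 : ℤ) < lowerWythoff k := by rw [h]; omega
  have hk : k ≠ 0 := by rintro rfl; simp [lowerWythoff] at hpos
  have hupper : ((lowerWythoff k : ℕ) : ℤ) = beattySeq (φ + 1) m := by
    rw [h, beattySeq, mul_add, mul_one, Int.floor_add_intCast]
    push_cast
    rw [natCast_lowerWythoff]; rfl
  have hmem := (Irrational.beattySeq_symmDiff_beattySeq_pos goldenRatio_holderConjugate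
    goldenRatio_irrational).symm ▸ (show ((lowerWythoff k : ℕ) : ℤ) ∈ {n : ℤ | 0 < n} from hpos)
  rcases hmem with ⟨_, hnot⟩ | ⟨_, hnot⟩
  · exact hnot ⟨m, by omega, hupper.symm⟩
  · exact hnot ⟨k, by omega, (natCast_lowerWythoff k).symm⟩

structure RowInvariant (n : ℕ) : Prop where
  fixed_of_lt : ∀ j, j + (n + 3) ≤ lowerWythoff (n + 2) → A n j = j
  fixed_of_ge : ∀ j, lowerWythoff (n + 1) ≤ j → A n j = j
  unmoved : ∀ v j, n + 1 ≤ v → j + (n + 2) = lowerWythoff (v + 1) →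
    lowerWythoff (v + 1) ≤ lowerWythoff (n + 1) + (n + 1) → A n j = v
  moved : ∀ v j, v ≤ n → j + (n + 2) = lowerWythoff (v + 1) + (v + 1) →
    lowerWythoff (n + 2) ≤ lowerWythoff (v + 1) + (v + 1) → A n j = v

namespace RowInvariant

lemma zero : RowInvariant 0 where
  fixed_of_lt _ _ := rfl
  fixed_of_ge _ _ := rfl
  unmoved v _ hv _ hle := by
    have := lowerWythoff_strictMono.monotone (show 2 ≤ v + 1 by omega)
    rw [lowerWythoff_one] at hle
    rw [lowerWythoff_two] at this
    omega
  moved v j hv hj hle := by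
    obtain rfl : v = 0 := by omega
    rw [lowerWythoff_one] at hj hle
    rw [lowerWythoff_two] at hle
    omega

variable {n : ℕ} (h : RowInvariant n)
include h

lemma jump_position : A n (lowerWythoff (n + 2) - (n + 2)) = n + 1 := by
  rcases Nat.eq_zero_or_pos n with rfl | hn
  · rw [lowerWythoff_two]; rfl
  · have := le_lowerWythoff (n + 2)
    have : lowerWythoff (n + 2) ≤ lowerWythoff (n + 1) + 2 := lowerWythoff_succ_le (n + 1)
    have key := h.unmoved (n + 1) (lowerWythoff (n + 2) - (n + 2)) le_rfl
    rw [show n + 1 + 1 = n + 2 from rfl] at key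
    exact key (by omega) (by omega)

lemma sInf_eq : sInf {i | A n i = n + 1} = lowerWythoff (n + 2) - (n + 2) := by
  refine le_antisymm (Nat.sInf_le h.jump_position)
    (le_csInf ⟨_, h.jump_position⟩ fun i (hi : A n i = n + 1) ↦ ?_)
  by_contra hlt
  have hup : lowerWythoff (n + 2) ≤ 2 * n + 3 := by
    rcases Nat.eq_zero_or_pos n with rfl | hn
    · exact lowerWythoff_two.le
    · linarith [lowerWythoff_add_two_le hn]
  have := h.fixed_of_lt i (by omega)
  omega

lemma A_succ (j : ℕ) : A (n + 1) j =
    let p := lowerWythoff (n + 2) - (n + 2)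
    if j < p then A n j
    else if j < p + (n + 1) then A n (j + 1)
    else if j = p + (n + 1) then n + 1
    else A n j := by
  rw [A, h.sInf_eq]

lemma fixed_of_lt_succ (j : ℕ) (hj : j + (n + 4) ≤ lowerWythoff (n + 3)) : A (n + 1) j = j := by
  have hgap : lowerWythoff (n + 3) ≤ lowerWythoff (n + 2) + 2 := lowerWythoff_succ_le (n + 2)
  have := le_lowerWythoff (n + 2)
  rw [h.A_succ]
  dsimp only
  obtain hlt | rfl : j < lowerWythoff (n + 2) - (n + 2) ∨ j = lowerWythoff (n + 2) - (n + 2) := by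
    omega
  · rw [if_pos hlt]
    exact h.fixed_of_lt j (by omega)
  · -- With `p = a (n + 2) - (n + 2)`: `a` skips `a (n + 2) + 1 = b (p + 1)`, so the entry `p`
    -- has already jumped to position `p + 1`.
    have hgap' : lowerWythoff (n + 3) = lowerWythoff (n + 2) + 2 := by omega
    have hn : 1 ≤ n := by
      rcases Nat.eq_zero_or_pos n with rfl | hn
      · rw [lowerWythoff_three, lowerWythoff_two] at hgap'; omega
      · exact hn
    have := lowerWythoff_add_two_le hn
    have hk := lowerWythoff_eq_of_succ_eq_add_two (m := n + 2)
      (k := lowerWythoff (n + 2) - (n + 2) + 1) (by omega) hgap' (by omega)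
    rw [if_neg (lt_irrefl _), if_pos (by omega)]
    exact h.moved _ _ (by omega) (by omega) (by omega)

lemma fixed_of_ge_succ (j : ℕ) (hj : lowerWythoff (n + 2) ≤ j) : A (n + 1) j = j := by
  have := le_lowerWythoff (n + 2)
  have := lowerWythoff_strictMono.monotone (show n + 1 ≤ n + 2 by omega)
  rw [h.A_succ]
  dsimp only
  rw [if_neg (by omega), if_neg (by omega), if_neg (by omega)]
  exact h.fixed_of_ge j (by omega)

lemma unmoved_succ (v j : ℕ) (hv : n + 2 ≤ v) (hj : j + (n + 3) = lowerWythoff (v + 1))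
    (hle : lowerWythoff (v + 1) ≤ lowerWythoff (n + 2) + (n + 2)) : A (n + 1) j = v := by
  have hne := lowerWythoff_ne_add_self (v + 1) (m := n + 2) (by omega)
  have hmono := lowerWythoff_strictMono.monotone (show n + 3 ≤ v + 1 by omega)
  have := lowerWythoff_strictMono (show n + 2 < n + 3 by omega)
  rw [h.A_succ]
  dsimp only
  rw [if_neg (by omega), if_pos (by omega)]
  by_cases hold : lowerWythoff (v + 1) ≤ lowerWythoff (n + 1) + (n + 1)
  · exact h.unmoved v (j + 1) (by omega) (by omega) hold
  · have := lowerWythoff_eq_add_of_between (n := n) (k := v + 1) (by omega) (by omega)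
    rw [h.fixed_of_ge (j + 1) (by omega)]
    omega

lemma moved_succ (v j : ℕ) (hv : v ≤ n + 1) (hj : j + (n + 3) = lowerWythoff (v + 1) + (v + 1))
    (hle : lowerWythoff (n + 3) ≤ lowerWythoff (v + 1) + (v + 1)) : A (n + 1) j = v := by
  have := le_lowerWythoff (n + 2)
  have := lowerWythoff_strictMono (show n + 2 < n + 3 by omega)
  rw [h.A_succ]
  dsimp only
  rcases (show v = n + 1 ∨ v ≤ n by omega) with hvn | hvn
  · have : lowerWythoff (v + 1) = lowerWythoff (n + 2) := by rw [hvn]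
    rw [if_neg (by omega), if_neg (by omega), if_pos (by omega)]
    omega
  · have := lowerWythoff_strictMono.monotone (show v + 1 ≤ n + 1 by omega)
    have := lowerWythoff_strictMono (show n + 1 < n + 2 by omega)
    rw [if_neg (by omega), if_pos (by omega)]
    exact h.moved v (j + 1) hvn (by omega) (by omega)

lemma succ : RowInvariant (n + 1) :=
  ⟨h.fixed_of_lt_succ, h.fixed_of_ge_succ, h.unmoved_succ, h.moved_succ⟩

end RowInvariant

lemma rowInvariant (n : ℕ) : RowInvariant n := by
  induction n with
  | zero => exact .zero
  | succ n ih => exact ih.succ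

theorem initial_fixed_segment (n : ℕ) (hn : 1 ≤ n) :
    (∀ i ≤ ⌊((n : ℝ) + 2) / phi⌋₊ - 1, A n i = i) ∧
      A n ((⌊((n : ℝ) + 2) / phi⌋₊ - 1) + 1) ≠ (⌊((n : ℝ) + 2) / phi⌋₊ - 1) + 1 := by
  have hfloor : ⌊((n : ℝ) + 2) / phi⌋₊ = lowerWythoff (n + 2) - (n + 2) := by
    have := lowerWythoff_eq_add_floor_div (n + 2)
    push_cast at this
    rw [phi_eq_goldenRatio]
    omega
  have hlow := lt_lowerWythoff (show 2 ≤ n + 2 by omega)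
  have hup := lowerWythoff_add_two_le hn
  have hrow := rowInvariant n
  rw [hfloor]
  refine ⟨fun i hi ↦ hrow.fixed_of_lt i (by omega), ?_⟩
  rw [Nat.sub_add_cancel (by omega), hrow.jump_position]
  omega
end
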